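/- Let n ≥ 2 be an integer and ℓ a natural number. Let g : ℝ → ℝ be such that g and deriv g are differentiable everywhere. Then for every t ∈ ℝ, (D_{n,ℓ} (fun s => Real.exp (2s) · g s))(t) = Real.exp (2t) · ( deriv (deriv g) t − (n−6)·deriv g t − (ℓ+2)(ℓ+n−4)·g t ). Note that the second-order operator on the right factors as (∂_t + (ℓ+2))(∂_t − (ℓ+n−4)); this yields the factorization of the Bilaplacian on the ℓ-th spherical-harmonic mode in logarithmic radial coordinates as e^{4t}(∂_t + ℓ)(∂_t − (ℓ+n−2))(∂_t + (ℓ+2))(∂_t − (ℓ+n−4)). -/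

import Mathlib

/-! Multiplying by `e^{2t}` shifts `∂_t` to `∂_t + 2`, so `D_{n,ℓ}(e^{2t} g) = e^{2t} P(∂_t + 2) g`
with `P(X) = X² - (n-2)X - ℓ(ℓ+n-2)`; expanding `P(X + 2)` gives the stated operator. -/

open Real

/-- The projected radial Laplacian of the ℓ-th spherical harmonic mode in the logarithmic
coordinate `r = e^{-t}`: `(D_{n,ℓ} w)(t) = w''(t) - (n-2) w'(t) - ℓ(ℓ+n-2) w(t)`. -/
noncomputable def logRadialLap (n ℓ : ℕ) (w : ℝ → ℝ) (t : ℝ) : ℝ :=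
  deriv (deriv w) t - ((n : ℝ) - 2) * deriv w t - (ℓ : ℝ) * ((ℓ : ℝ) + n - 2) * w t

theorem deriv_exp_const_mul_mul (c : ℝ) {g : ℝ → ℝ} {t : ℝ} (hg : DifferentiableAt ℝ g t) :
    deriv (fun s => exp (c * s) * g s) t = exp (c * t) * (deriv g t + c * g t) := by
  have hexp : HasDerivAt (fun s => exp (c * s)) (exp (c * t) * c) t :=
    (hasDerivAt_exp (c * t)).comp t ((hasDerivAt_id t).const_mul c |>.congr_deriv (mul_one c))
  rw [(hexp.fun_mul hg.hasDerivAt).deriv]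
  ring

theorem deriv_deriv_exp_const_mul_mul (c : ℝ) {g : ℝ → ℝ} {t : ℝ} (hg : Differentiable ℝ g)
    (hg' : DifferentiableAt ℝ (deriv g) t) :
    deriv (deriv fun s => exp (c * s) * g s) t =
      exp (c * t) * (deriv (deriv g) t + 2 * c * deriv g t + c ^ 2 * g t) := by
  have hderiv : deriv (fun s => exp (c * s) * g s) = fun s => exp (c * s) * (deriv g s + c * g s) :=
    funext fun s => deriv_exp_const_mul_mul c (hg s)
  have hshift : DifferentiableAt ℝ (fun s => deriv g s + c * g s) t :=
    hg'.add ((hg t).const_mul c)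
  rw [hderiv, deriv_exp_const_mul_mul c hshift, deriv_fun_add hg' ((hg t).const_mul c),
    deriv_const_mul c (hg t)]
  ring

theorem logRadialLap_conjugate_exp_general (n : ℕ) (ℓ : ℕ) (g : ℝ → ℝ)
    (hg : ∀ t : ℝ, DifferentiableAt ℝ g t)
    (hg' : ∀ t : ℝ, DifferentiableAt ℝ (deriv g) t) :
    ∀ t : ℝ,
      logRadialLap n ℓ (fun s : ℝ => Real.exp (2 * s) * g s) t =
        Real.exp (2 * t) *
          (deriv (deriv g) t - ((n : ℝ) - 6) * deriv g t -
            ((ℓ : ℝ) + 2) * ((ℓ : ℝ) + n - 4) * g t) := by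
  intro t
  rw [logRadialLap, deriv_deriv_exp_const_mul_mul 2 hg (hg' t),
    deriv_exp_const_mul_mul 2 (hg t)]
  ring

/-- Conjugating `D_{n,ℓ}` by multiplication with `e^{2t}` yields the second-order operator
`∂_t² - (n-6)∂_t - (ℓ+2)(ℓ+n-4)`, which factors as `(∂_t + (ℓ+2))(∂_t - (ℓ+n-4))`; this
gives the factorization of the Bilaplacian on the ℓ-th mode in logarithmic coordinates. -/
theorem logRadialLap_conjugate_exp (n : ℕ) (hn : 2 ≤ n) (ℓ : ℕ) (g : ℝ → ℝ)
    (hg : ∀ t : ℝ, DifferentiableAt ℝ g t)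
    (hg' : ∀ t : ℝ, DifferentiableAt ℝ (deriv g) t) :
    ∀ t : ℝ,
      logRadialLap n ℓ (fun s : ℝ => Real.exp (2 * s) * g s) t =
        Real.exp (2 * t) *
          (deriv (deriv g) t - ((n : ℝ) - 6) * deriv g t -
            ((ℓ : ℝ) + 2) * ((ℓ : ℝ) + n - 4) * g t) :=
  logRadialLap_conjugate_exp_general n ℓ g hg hg'
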